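/- Partition {1,…,d} into disjoint blocks G₁,…,G_G. Let z ~ N(0, I_d) and independent block masks m_i^blk ~ Bernoulli(π_i^blk), and define v on block G_i as m_i^blk · z_{G_i}. Fix g ∈ ℝ^d and Δ = ⟨g, v⟩. Then the block estimator g̃_{G_i} = (Δ/π_i^blk) m_i^blk z_{G_i} satisfies E[g̃_{G_i}] = g_{G_i} for every block i with π_i^blk > 0. -/

import Mathlib

open MeasureTheory ProbabilityTheory Finset
open scoped NNReal ENNReal

/-! Expanding `Δ = ∑ k, g k * m (b k) * z k`, the term `k ≠ j` of `E[Δ m_i z_j]` vanishes because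
`z_j` is centred and independent of the other three factors. For `k = j` we have `b j = i`, and
`m_i² = m_i` leaves `g_j E[m_i] E[z_j²] = g_j π_i`. -/

namespace ProbabilityTheory.HasLaw

variable {Ω : Type*} [MeasurableSpace Ω] {P : Measure Ω} {X : Ω → ℝ} {μ : ℝ} {v : ℝ≥0}

lemma memLp_of_gaussianReal (hX : HasLaw X (gaussianReal μ v) P) {p : ℝ≥0∞} (hp : p ≠ ∞) :
    MemLp X p P := by
  have h := memLp_id_gaussianReal' (μ := μ) (v := v) p hp
  rw [← hX.map_eq] at h
  exact h.comp_of_map hX.aemeasurable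

lemma integral_of_gaussianReal (hX : HasLaw X (gaussianReal μ v) P) : ∫ ω, X ω ∂P = μ :=
  hX.integral_eq.trans integral_id_gaussianReal

lemma integral_sq_of_gaussianReal [IsProbabilityMeasure P] (hX : HasLaw X (gaussianReal μ v) P) :
    ∫ ω, X ω ^ 2 ∂P = μ ^ 2 + v := by
  have h := variance_eq_sub (hX.memLp_of_gaussianReal ENNReal.ofNat_ne_top)
  rw [hX.variance_eq, variance_id_gaussianReal, hX.integral_of_gaussianReal] at h
  simp only [Pi.pow_apply] at h
  linarith

end ProbabilityTheory.HasLaw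

lemma integral_eq_measureReal_of_eq_zero_or_eq_one {Ω : Type*} [MeasurableSpace Ω]
    {P : Measure Ω} {m : Ω → ℝ} (hm_meas : Measurable m)
    (hm : ∀ ω, m ω = 0 ∨ m ω = 1) : ∫ ω, m ω ∂P = P.real {ω | m ω = 1} := by
  have : m = {ω | m ω = 1}.indicator 1 := by
    ext ω
    rcases hm ω with h | h <;> simp [h]
  calc ∫ ω, m ω ∂P = ∫ ω, {ω | m ω = 1}.indicator 1 ω ∂P := by rw [← this]
    _ = P.real {ω | m ω = 1} := integral_indicator_one (hm_meas (measurableSet_singleton 1))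

section MaskedGaussian

variable {Ω κ ι : Type*} [MeasurableSpace Ω] {P : Measure Ω} {m : κ → Ω → ℝ} {z : ι → Ω → ℝ}
  {v : ℝ≥0}

lemma integrable_mask_mul_mul_mask_mul (hm_meas : ∀ i, Measurable (m i))
    (hm : ∀ i ω, |m i ω| ≤ 1) (hz : ∀ k, HasLaw (z k) (gaussianReal 0 v) P) (p i : κ) (k j : ι) :
    Integrable (fun ω ↦ m p ω * z k ω * (m i ω * z j ω)) P := by
  have hzz : Integrable (z k * z j) P :=
    ((hz k).memLp_of_gaussianReal (p := 2) (by simp)).integrable_mul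
      ((hz j).memLp_of_gaussianReal (p := 2) (by simp))
  have h := hzz.bdd_mul (c := 1) ((hm_meas p).mul (hm_meas i)).aestronglyMeasurable
    (ae_of_all _ fun ω ↦ by
      simpa [abs_mul] using mul_le_one₀ (hm p ω) (abs_nonneg _) (hm i ω))
  exact h.congr (ae_of_all _ fun ω ↦ by simp only [Pi.mul_apply]; ring)

lemma integral_mask_mul_mul_mask_mul_of_ne (hindep : iIndepFun (Sum.elim m z) P)
    (hm_meas : ∀ i, Measurable (m i)) (hz_meas : ∀ k, Measurable (z k))
    (hz : ∀ k, HasLaw (z k) (gaussianReal 0 v) P) (p i : κ) {k j : ι} (hkj : k ≠ j) :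
    ∫ ω, m p ω * z k ω * (m i ω * z j ω) ∂P = 0 := by
  classical
  have hmeas : ∀ u, Measurable (Sum.elim m z u) := Sum.forall.2 ⟨hm_meas, hz_meas⟩
  let S : Finset (κ ⊕ ι) := {.inl p, .inl i, .inr k}
  have hST : Disjoint S {.inr j} := by simp [S, hkj.symm]
  have hindep_zj : IndepFun (fun ω ↦ m p ω * z k ω * m i ω) (z j) P := by
    refine (hindep.indepFun_finset S {.inr j} hST hmeas).comp
      (φ := fun x : S → ℝ ↦
        x ⟨.inl p, by simp [S]⟩ * x ⟨.inr k, by simp [S]⟩ * x ⟨.inl i, by simp [S]⟩)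
      (ψ := fun x : ({.inr j} : Finset (κ ⊕ ι)) → ℝ ↦ x ⟨.inr j, by simp⟩) ?_ ?_ <;> fun_prop
  calc ∫ ω, m p ω * z k ω * (m i ω * z j ω) ∂P
      = ∫ ω, m p ω * z k ω * m i ω * z j ω ∂P := by simp only [mul_assoc]
    _ = 0 := by
      rw [hindep_zj.integral_fun_mul_eq_mul_integral (by fun_prop) (hz_meas j).aestronglyMeasurable,
        (hz j).integral_of_gaussianReal, mul_zero]

lemma integral_mask_mul_mul_mask_mul_self [IsProbabilityMeasure P]
    (hindep : iIndepFun (Sum.elim m z) P)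
    (hm_meas : ∀ i, Measurable (m i)) (hz_meas : ∀ k, Measurable (z k))
    (hz : ∀ k, HasLaw (z k) (gaussianReal 0 v) P) (p i : κ) (j : ι) :
    ∫ ω, m p ω * z j ω * (m i ω * z j ω) ∂P = (∫ ω, m p ω * m i ω ∂P) * v := by
  have hmeas : ∀ u, Measurable (Sum.elim m z u) := Sum.forall.2 ⟨hm_meas, hz_meas⟩
  have hindep_sq : IndepFun (fun ω ↦ m p ω * m i ω) (fun ω ↦ z j ω ^ 2) P :=
    (hindep.indepFun_prodMk hmeas (.inl p) (.inl i) (.inr j) (by simp) (by simp)).comp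
      (φ := fun x : ℝ × ℝ ↦ x.1 * x.2) (ψ := fun x : ℝ ↦ x ^ 2) (by fun_prop) (by fun_prop)
  calc ∫ ω, m p ω * z j ω * (m i ω * z j ω) ∂P
      = ∫ ω, m p ω * m i ω * z j ω ^ 2 ∂P := by congr 1; ext ω; ring
    _ = (∫ ω, m p ω * m i ω ∂P) * v := by
      rw [hindep_sq.integral_fun_mul_eq_mul_integral (by fun_prop) (by fun_prop),
        (hz j).integral_sq_of_gaussianReal]
      simp

lemma integral_sum_mask_mul_mul_mask_mul [IsProbabilityMeasure P] [Fintype ι]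
    (hindep : iIndepFun (Sum.elim m z) P)
    (hm_meas : ∀ i, Measurable (m i)) (hz_meas : ∀ k, Measurable (z k))
    (hm : ∀ i ω, |m i ω| ≤ 1) (hz : ∀ k, HasLaw (z k) (gaussianReal 0 v) P)
    (b : ι → κ) (g : ι → ℝ) (i : κ) (j : ι) :
    ∫ ω, (∑ k, g k * (m (b k) ω * z k ω)) * (m i ω * z j ω) ∂P
      = g j * ((∫ ω, m (b j) ω * m i ω ∂P) * v) := by
  simp_rw [Finset.sum_mul, mul_assoc (g _)]
  rw [integral_finsetSum _ fun k _ ↦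
    (integrable_mask_mul_mul_mask_mul hm_meas hm hz (b k) i k j).const_mul (g k)]
  rw [Finset.sum_eq_single j (fun k _ hkj ↦ by
      rw [integral_const_mul,
        integral_mask_mul_mul_mask_mul_of_ne hindep hm_meas hz_meas hz _ _ hkj, mul_zero])
      (by simp),
    integral_const_mul, integral_mask_mul_mul_mask_mul_self hindep hm_meas hz_meas hz]

end MaskedGaussian

theorem stmt16_general {Ω : Type*} [MeasureSpace Ω] [IsProbabilityMeasure (ℙ : Measure Ω)]
    {d G : ℕ} (b : Fin d → Fin G)
    (πblk : Fin G → ℝ)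
    (mblk : Fin G → Ω → ℝ) (z : Fin d → Ω → ℝ)
    (hm01 : ∀ i a, mblk i a = 0 ∨ mblk i a = 1)
    (hmmeas : ∀ i, Measurable (mblk i)) (hzmeas : ∀ j, Measurable (z j))
    (hmπ : ∀ i, (ℙ {a | mblk i a = 1}).toReal = πblk i)
    (hz : ∀ j, Measure.map (z j) ℙ = gaussianReal 0 1)
    (hindep : iIndepFun (β := fun _ : Fin G ⊕ Fin d => ℝ)
      (Sum.elim mblk z) ℙ)
    (g : Fin d → ℝ) :
    ∀ i : Fin G, 0 < πblk i → ∀ j : Fin d, b j = i →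
      𝔼[fun a =>
          (∑ k, g k * (mblk (b k) a * z k a)) / πblk i * mblk i a * z j a] = g j := by
  intro i hπi j hbj
  have hm_abs (l : Fin G) (a : Ω) : |mblk l a| ≤ 1 := by rcases hm01 l a with h | h <;> simp [h]
  have hz_law (k : Fin d) : HasLaw (z k) (gaussianReal 0 1) ℙ := ⟨(hzmeas k).aemeasurable, hz k⟩
  have hm_sq : ∫ a, mblk i a * mblk i a = πblk i := by
    have hidem (a : Ω) : mblk i a * mblk i a = mblk i a := by
      rcases hm01 i a with h | h <;> simp [h]
    simp_rw [hidem]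
    rw [integral_eq_measureReal_of_eq_zero_or_eq_one (hmmeas i) (hm01 i), measureReal_def, hmπ]
  calc 𝔼[fun a => (∑ k, g k * (mblk (b k) a * z k a)) / πblk i * mblk i a * z j a]
      = (πblk i)⁻¹ * ∫ a, (∑ k, g k * (mblk (b k) a * z k a)) * (mblk i a * z j a) := by
        rw [← integral_const_mul]
        congr 1 with a
        ring
    _ = g j := by
        rw [integral_sum_mask_mul_mul_mask_mul hindep hmmeas hzmeas hm_abs hz_law, hbj, hm_sq,
          NNReal.coe_one, mul_one]
        field_simp

/-- Block-wise sparse zeroth-order estimation: with blocks given by `b : Fin d → Fin G`,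
block masks `m_i^blk ~ Bernoulli(π_i^blk)`, Gaussian `z`, `v_j = m_{b j}^blk z_j` and
`Δ = ⟨g, v⟩`, the block estimator `g̃_{G_i} = (Δ/π_i^blk) m_i^blk z_{G_i}` is unbiased:
each coordinate `j` of block `i` has expectation `g_j` whenever `π_i^blk > 0`. -/
theorem stmt16 {Ω : Type*} [MeasureSpace Ω] [IsProbabilityMeasure (ℙ : Measure Ω)]
    {d G : ℕ} (b : Fin d → Fin G)
    (πblk : Fin G → ℝ) (hπ : ∀ i, πblk i ∈ Set.Icc (0 : ℝ) 1)
    (mblk : Fin G → Ω → ℝ) (z : Fin d → Ω → ℝ)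
    (hm01 : ∀ i a, mblk i a = 0 ∨ mblk i a = 1)
    (hmmeas : ∀ i, Measurable (mblk i)) (hzmeas : ∀ j, Measurable (z j))
    (hmπ : ∀ i, (ℙ {a | mblk i a = 1}).toReal = πblk i)
    (hz : ∀ j, Measure.map (z j) ℙ = gaussianReal 0 1)
    (hindep : iIndepFun (β := fun _ : Fin G ⊕ Fin d => ℝ)
      (Sum.elim mblk z) ℙ)
    (g : Fin d → ℝ) :
    ∀ i : Fin G, 0 < πblk i → ∀ j : Fin d, b j = i →
      𝔼[fun a =>
          (∑ k, g k * (mblk (b k) a * z k a)) / πblk i * mblk i a * z j a] = g j :=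
  stmt16_general b πblk mblk z hm01 hmmeas hzmeas hmπ hz hindep g
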